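/- Let w be a modular cone metric on X, e ∈ int P, and let W^e_λ(x,y) = ξ_e(w_{λe}(x,y)). Then a sequence {xₙ} in X is modular cone convergent to x ∈ X if and only if for every λ > 0, W^e_λ(xₙ, x) → 0 as n → ∞. -/

import Mathlib

/-!
The triangle inequality with `z = y` makes `c ↦ w_c(a, y)` antitone, and with `x = y` it makes
`w` nonnegative. If `w_{δe}(xₙ, x) ≪ δe` eventually, then `w_{λe}(xₙ, x) ⪯ w_{δe}(xₙ, x) ⪯ δe`
for `δ < λ`, so `0 ≤ ξ_e(w_{λe}(xₙ, x)) ≤ δ`. Conversely, every `c ≫ θ` satisfies `εe ≪ c` for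
some `ε > 0`, and once `ξ_e(w_{εe}(xₙ, x)) < ε` we get `w_c(xₙ, x) ⪯ w_{εe}(xₙ, x) ⪯ εe ≪ c`.
-/

open Filter Topology

/-- The nonlinear scalarization `ξ_e`. -/

noncomputable def scalarization {E : Type*} [AddCommGroup E] [Module ℝ E] (P : Set E) (e v : E) :
    ℝ :=
  sInf {r : ℝ | r • e - v ∈ P}

open scoped Pointwise in
theorem add_mem_interior_of_mem_interior {G : Type*} [AddGroup G] [TopologicalSpace G]
    [IsTopologicalAddGroup G] {P : Set G} (hPadd : ∀ a ∈ P, ∀ b ∈ P, a + b ∈ P) {a b : G}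
    (ha : a ∈ interior P) (hb : b ∈ P) : a + b ∈ interior P :=
  interior_mono (Set.add_subset_iff.2 hPadd) (subset_interior_add_left (Set.add_mem_add ha hb))

section Cone

variable {E : Type*} [AddCommGroup E] [Module ℝ E] {P : Set E}

theorem smul_sub_mem_of_le (hPadd : ∀ a ∈ P, ∀ b ∈ P, a + b ∈ P)
    (hPsmul : ∀ r : ℝ, 0 ≤ r → ∀ a ∈ P, r • a ∈ P) {e v : E} (he : e ∈ P) {r t : ℝ}
    (hr : r • e - v ∈ P) (hrt : r ≤ t) : t • e - v ∈ P := by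
  convert hPadd _ hr _ (hPsmul (t - r) (sub_nonneg.2 hrt) e he) using 1
  module

theorem scalarization_le {e v : E} {t : ℝ} (ht : 0 ≤ t) (h : t • e - v ∈ P) :
    scalarization P e v ≤ t := by
  by_cases hbdd : BddBelow {r : ℝ | r • e - v ∈ P}
  · exact csInf_le hbdd h
  · rwa [scalarization, Real.sInf_of_not_bddBelow hbdd]

theorem scalarization_nonneg (hPadd : ∀ a ∈ P, ∀ b ∈ P, a + b ∈ P)
    (hPsmul : ∀ r : ℝ, 0 ≤ r → ∀ a ∈ P, r • a ∈ P) (e : E) {v : E} (hv : v ∈ P) :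
    0 ≤ scalarization P e v := by
  -- An `r < 0` in the set would bring every `s * r` with `s ≥ 1` along, so the set would be
  -- unbounded below and `sInf` would take its junk value `0`.
  by_cases hbdd : BddBelow {r : ℝ | r • e - v ∈ P}
  · obtain ⟨b, hb⟩ := hbdd
    refine Real.sInf_nonneg fun r hr => ?_
    by_contra! hneg
    set s := max 1 ((b - 1) / r)
    have hs : (s * r) • e - v ∈ P := by
      convert hPadd _ (hPsmul s (by positivity) _ hr) _
        (hPsmul (s - 1) (sub_nonneg.2 (le_max_left _ _)) v hv) using 1
      module
    have hsr : s * r ≤ b - 1 := by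
      calc s * r ≤ (b - 1) / r * r := mul_le_mul_of_nonpos_right (le_max_right _ _) hneg.le
        _ = b - 1 := div_mul_cancel₀ _ hneg.ne
    linarith [hb hs]
  · rw [scalarization, Real.sInf_of_not_bddBelow hbdd]

theorem smul_sub_mem_of_scalarization_lt (hPadd : ∀ a ∈ P, ∀ b ∈ P, a + b ∈ P)
    (hPsmul : ∀ r : ℝ, 0 ≤ r → ∀ a ∈ P, r • a ∈ P) {e v : E} (he : e ∈ P)
    (hne : ∃ r : ℝ, r • e - v ∈ P) {t : ℝ} (h : scalarization P e v < t) : t • e - v ∈ P := by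
  obtain ⟨r, hr, hrt⟩ := exists_lt_of_csInf_lt hne h
  exact smul_sub_mem_of_le hPadd hPsmul he hr hrt.le

variable [TopologicalSpace E]

open scoped Pointwise in
theorem smul_mem_interior_of_pos [ContinuousSMul ℝ E]
    (hPsmul : ∀ r : ℝ, 0 ≤ r → ∀ a ∈ P, r • a ∈ P) {r : ℝ} (hr : 0 < r) {a : E}
    (ha : a ∈ interior P) : r • a ∈ interior P := by
  have hsub : r • P ⊆ P := Set.smul_set_subset_iff.2 fun b hb => hPsmul r hr.le b hb
  exact interior_mono hsub (interior_smul₀ hr.ne' P ▸ Set.smul_mem_smul_set ha)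

theorem exists_pos_sub_smul_mem_interior [ContinuousSub E] [ContinuousSMul ℝ E] {c : E}
    (hc : c ∈ interior P) (e : E) : ∃ ε : ℝ, 0 < ε ∧ c - ε • e ∈ interior P := by
  have hlim : Tendsto (fun t : ℝ => c - t • e) (𝓝[>] 0) (𝓝 c) := by
    simpa using (tendsto_const_nhds.sub ((tendsto_id (x := 𝓝 (0 : ℝ))).smul_const e)).mono_left
      nhdsWithin_le_nhds
  obtain ⟨ε, hε, hεpos⟩ :=
    ((hlim.eventually (isOpen_interior.mem_nhds hc)).and self_mem_nhdsWithin).exists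
  exact ⟨ε, hεpos, hε⟩

theorem exists_smul_sub_mem_of_mem_interior [ContinuousSub E] [ContinuousSMul ℝ E]
    (hPsmul : ∀ r : ℝ, 0 ≤ r → ∀ a ∈ P, r • a ∈ P) {e : E} (he : e ∈ interior P) (v : E) :
    ∃ r : ℝ, r • e - v ∈ P := by
  have hlim : Tendsto (fun r : ℝ => e - r⁻¹ • v) atTop (𝓝 e) := by
    simpa using tendsto_const_nhds.sub ((tendsto_inv_atTop_zero (𝕜 := ℝ)).smul_const v)
  obtain ⟨r, hr, hrpos⟩ :=
    ((hlim.eventually (isOpen_interior.mem_nhds he)).and (eventually_gt_atTop 0)).exists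
  refine ⟨r, ?_⟩
  convert hPsmul r hrpos.le _ (interior_subset hr) using 1
  rw [smul_sub, smul_inv_smul₀ hrpos.ne']

end Cone

section ModularConeMetric

variable {E : Type*} [AddCommGroup E] [TopologicalSpace E] {P : Set E} {X : Type*}
  {w : E → X → X → E}

def ModularConeTendsto (P : Set E) (w : E → X → X → E) (u : ℕ → X) (x : X) : Prop :=
  ∀ c ∈ interior P, ∃ N : ℕ, ∀ n > N, c - w c (u n) x ∈ interior P

theorem modular_sub_modular_add_mem (hw_self : ∀ c ∈ interior P, ∀ a : X, w c a a = 0)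
    (hw3 : ∀ c₁ ∈ interior P, ∀ c₂ ∈ interior P, ∀ x y z : X,
      w c₁ x z + w c₂ z y - w (c₁ + c₂) x y ∈ P)
    {c d : E} (hc : c ∈ interior P) (hd : d ∈ interior P) (a y : X) :
    w c a y - w (c + d) a y ∈ P := by
  simpa [hw_self d hd y] using hw3 c hc d hd a y y

variable [Module ℝ E] [IsTopologicalAddGroup E]

theorem modular_mem (hPadd : ∀ a ∈ P, ∀ b ∈ P, a + b ∈ P)
    (hPsmul : ∀ r : ℝ, 0 ≤ r → ∀ a ∈ P, r • a ∈ P)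
    (hw_self : ∀ c ∈ interior P, ∀ a : X, w c a a = 0)
    (hw2 : ∀ c ∈ interior P, ∀ x y : X, w c x y = w c y x)
    (hw3 : ∀ c₁ ∈ interior P, ∀ c₂ ∈ interior P, ∀ x y z : X,
      w c₁ x z + w c₂ z y - w (c₁ + c₂) x y ∈ P)
    {c : E} (hc : c ∈ interior P) (a b : X) : w c a b ∈ P := by
  have h := hw3 c hc c hc a a b
  rw [hw_self _ (add_mem_interior_of_mem_interior hPadd hc (interior_subset hc)),
    hw2 c hc b a] at h
  convert hPsmul (1 / 2) (by norm_num) _ h using 1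
  module

variable [ContinuousSMul ℝ E]

theorem ModularConeTendsto.tendsto_scalarization (hPadd : ∀ a ∈ P, ∀ b ∈ P, a + b ∈ P)
    (hPsmul : ∀ r : ℝ, 0 ≤ r → ∀ a ∈ P, r • a ∈ P)
    (hw_self : ∀ c ∈ interior P, ∀ a : X, w c a a = 0)
    (hw2 : ∀ c ∈ interior P, ∀ x y : X, w c x y = w c y x)
    (hw3 : ∀ c₁ ∈ interior P, ∀ c₂ ∈ interior P, ∀ x y z : X,
      w c₁ x z + w c₂ z y - w (c₁ + c₂) x y ∈ P)
    {e : E} (he : e ∈ interior P) {u : ℕ → X} {x : X} (hconv : ModularConeTendsto P w u x)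
    {lam : ℝ} (hlam : 0 < lam) :
    Tendsto (fun n => scalarization P e (w (lam • e) (u n) x)) atTop (𝓝 0) := by
  have hint {t : ℝ} (ht : 0 < t) : t • e ∈ interior P := smul_mem_interior_of_pos hPsmul ht he
  have hnonneg (n : ℕ) : 0 ≤ scalarization P e (w (lam • e) (u n) x) :=
    scalarization_nonneg hPadd hPsmul e (modular_mem hPadd hPsmul hw_self hw2 hw3 (hint hlam) _ _)
  refine tendsto_order.2
    ⟨fun a ha => Eventually.of_forall fun n => ha.trans_le (hnonneg n), fun b hb => ?_⟩
  set δ := min (b / 2) (lam / 2)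
  have hδ : 0 < δ := by positivity
  have hδb : δ < b := (min_le_left _ _).trans_lt (half_lt_self hb)
  have hδlam : δ < lam := (min_le_right _ _).trans_lt (half_lt_self hlam)
  obtain ⟨N, hN⟩ := hconv _ (hint hδ)
  filter_upwards [eventually_gt_atTop N] with n hn
  have hmono := modular_sub_modular_add_mem hw_self hw3 (hint hδ) (hint (sub_pos.2 hδlam)) (u n) x
  rw [← add_smul, add_sub_cancel] at hmono
  have hle : δ • e - w (lam • e) (u n) x ∈ P := by
    convert hPadd _ (interior_subset (hN n hn)) _ hmono using 1
    abel
  exact (scalarization_le hδ.le hle).trans_lt hδb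

theorem modularConeTendsto_of_tendsto_scalarization (hPadd : ∀ a ∈ P, ∀ b ∈ P, a + b ∈ P)
    (hPsmul : ∀ r : ℝ, 0 ≤ r → ∀ a ∈ P, r • a ∈ P)
    (hw_self : ∀ c ∈ interior P, ∀ a : X, w c a a = 0)
    (hw3 : ∀ c₁ ∈ interior P, ∀ c₂ ∈ interior P, ∀ x y z : X,
      w c₁ x z + w c₂ z y - w (c₁ + c₂) x y ∈ P)
    {e : E} (he : e ∈ interior P) {u : ℕ → X} {x : X}
    (htend : ∀ lam : ℝ, 0 < lam →
      Tendsto (fun n => scalarization P e (w (lam • e) (u n) x)) atTop (𝓝 0)) :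
    ModularConeTendsto P w u x := by
  intro c hc
  obtain ⟨ε, hε, hcε⟩ := exists_pos_sub_smul_mem_interior hc e
  obtain ⟨N, hN⟩ := eventually_atTop.1 ((htend ε hε).eventually (eventually_lt_nhds hε))
  refine ⟨N, fun n hn => ?_⟩
  have hle : ε • e - w (ε • e) (u n) x ∈ P :=
    smul_sub_mem_of_scalarization_lt hPadd hPsmul (interior_subset he)
      (exists_smul_sub_mem_of_mem_interior hPsmul he _) (hN n hn.le)
  have hmono := modular_sub_modular_add_mem hw_self hw3
    (smul_mem_interior_of_pos hPsmul hε he) hcε (u n) x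
  rw [add_sub_cancel] at hmono
  convert add_mem_interior_of_mem_interior hPadd hcε (hPadd _ hle _ hmono) using 1
  abel

end ModularConeMetric

theorem modular_cone_convergence_iff_scalarized_tendsto_zero_general
    {E : Type*} [AddCommGroup E] [Module ℝ E] [TopologicalSpace E]
    [IsTopologicalAddGroup E] [ContinuousSMul ℝ E]
    (P : Set E)
    (hPadd : ∀ a ∈ P, ∀ b ∈ P, a + b ∈ P)
    (hPsmul : ∀ r : ℝ, 0 ≤ r → ∀ a ∈ P, r • a ∈ P)
    {X : Type*}
    (w : E → X → X → E)
    (hw1 : ∀ x y : X, (∀ c ∈ interior P, w c x y = 0) ↔ x = y)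
    (hw2 : ∀ c ∈ interior P, ∀ x y : X, w c x y = w c y x)
    (hw3 : ∀ c₁ ∈ interior P, ∀ c₂ ∈ interior P, ∀ x y z : X,
      w c₁ x z + w c₂ z y - w (c₁ + c₂) x y ∈ P)
    (e : E) (he : e ∈ interior P)
    (W : ℝ → X → X → ℝ)
    (hW : ∀ lam : ℝ, 0 < lam → ∀ x y : X,
      W lam x y = sInf {r : ℝ | r • e - w (lam • e) x y ∈ P})
    (u : ℕ → X) (x : X) :
    (∀ c ∈ interior P, ∃ N : ℕ, ∀ n > N, c - w c (u n) x ∈ interior P) ↔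
    (∀ lam : ℝ, 0 < lam →
      Filter.Tendsto (fun n => W lam (u n) x) Filter.atTop (nhds 0)) := by
  have hw_self : ∀ c ∈ interior P, ∀ a : X, w c a a = 0 := fun c hc a => (hw1 a a).2 rfl c hc
  have hW_eq : ∀ lam : ℝ, 0 < lam →
      (fun n => W lam (u n) x) = fun n => scalarization P e (w (lam • e) (u n) x) :=
    fun lam hlam => funext fun n => hW lam hlam _ _
  constructor
  · intro hconv lam hlam
    rw [hW_eq lam hlam]
    exact ModularConeTendsto.tendsto_scalarization hPadd hPsmul hw_self hw2 hw3 he hconv hlam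
  · intro htend
    exact modularConeTendsto_of_tendsto_scalarization hPadd hPsmul hw_self hw3 he
      fun lam hlam => hW_eq lam hlam ▸ htend lam hlam

/-- Let `w` be a modular cone metric on `X`, `e ∈ interior P`, and let
`W^e_λ(x,y) = ξ_e(w (λ • e) x y)` with `ξ_e(v) = inf {r : ℝ | r • e - v ∈ P}`.
A sequence `{xₙ}` in `X` is modular cone convergent to `x` (for every `c ≫ θ` there
is `N` with `w c xₙ x ≪ c` for all `n > N`) if and only if for every `λ > 0`,
`W^e_λ(xₙ, x) → 0` as `n → ∞`. -/
theorem modular_cone_convergence_iff_scalarized_tendsto_zero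
    {E : Type*} [AddCommGroup E] [Module ℝ E] [TopologicalSpace E]
    [IsTopologicalAddGroup E] [ContinuousSMul ℝ E]
    [LocallyConvexSpace ℝ E] [T2Space E]
    (P : Set E) (hPclosed : IsClosed P) (hPconv : Convex ℝ P)
    (hPadd : ∀ a ∈ P, ∀ b ∈ P, a + b ∈ P)
    (hPsmul : ∀ r : ℝ, 0 ≤ r → ∀ a ∈ P, r • a ∈ P)
    (hPpointed : P ∩ (-P) = {0})
    (hPint : (interior P).Nonempty)
    {X : Type*} [Nonempty X]
    (w : E → X → X → E)
    (hw1 : ∀ x y : X, (∀ c ∈ interior P, w c x y = 0) ↔ x = y)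
    (hw2 : ∀ c ∈ interior P, ∀ x y : X, w c x y = w c y x)
    (hw3 : ∀ c₁ ∈ interior P, ∀ c₂ ∈ interior P, ∀ x y z : X,
      w c₁ x z + w c₂ z y - w (c₁ + c₂) x y ∈ P)
    (e : E) (he : e ∈ interior P)
    (W : ℝ → X → X → ℝ)
    (hW : ∀ lam : ℝ, 0 < lam → ∀ x y : X,
      W lam x y = sInf {r : ℝ | r • e - w (lam • e) x y ∈ P})
    (u : ℕ → X) (x : X) :
    (∀ c ∈ interior P, ∃ N : ℕ, ∀ n > N, c - w c (u n) x ∈ interior P) ↔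
    (∀ lam : ℝ, 0 < lam →
      Filter.Tendsto (fun n => W lam (u n) x) Filter.atTop (nhds 0)) :=
  modular_cone_convergence_iff_scalarized_tendsto_zero_general P hPadd hPsmul w hw1 hw2 hw3 e he W
    hW u x
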